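/- Let L be a positive integer. For ℓ = 1, …, L set d(ℓ) = (−1)^ℓ · C(L, ℓ) · ∏_{k=0}^{ℓ−1} (1/2 − L + k)/(3/2 + k), and set d(0) = 1. Then for every ℓ = 0, 1, …, L one has d(ℓ) = C(2L+1, 2(L−ℓ)) / (2L+1). Equivalently, for every n = 0, …, L, d(L−n)/d(L) = C(2L+1, 2n) and d(L) = 1/(2L+1). -/

import Mathlib

/-!
Both sides of the closed form equal `1` at `ℓ = 0` and obey the same first-order recurrence
`d (ℓ + 1) = d ℓ * (L - ℓ) (2 (L - ℓ) - 1) / ((ℓ + 1) (2 ℓ + 3))`: for the product formula this is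
`C(L, ℓ+1) (ℓ+1) = C(L, ℓ) (L - ℓ)` together with the new factor of the product, and for
`C(2L+1, 2(L-ℓ))` it is two steps of the same Pascal-type ratio.
-/

open Finset

theorem choose_add_two_mul (n k : ℕ) :
    n.choose (k + 2) * ((k + 1) * (k + 2)) = n.choose k * ((n - k) * (n - k - 1)) := by
  have h1 := Nat.choose_succ_right_eq n k
  have h2 := Nat.choose_succ_right_eq n (k + 1)
  rw [← Nat.sub_sub] at h2
  calc n.choose (k + 2) * ((k + 1) * (k + 2))
      = n.choose (k + 1 + 1) * (k + 1 + 1) * (k + 1) := by ring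
    _ = n.choose k * (n - k) * (n - k - 1) := by rw [h2, mul_right_comm, h1]
    _ = _ := by ring

theorem cast_choose_succ_right_mul (n k : ℕ) :
    (n.choose (k + 1) : ℝ) * (k + 1) = n.choose k * ((n : ℝ) - k) := by
  rcases le_or_gt k n with hk | hk
  · have h := congrArg (Nat.cast : ℕ → ℝ) (Nat.choose_succ_right_eq n k)
    push_cast [Nat.cast_sub hk] at h
    exact h
  · simp [Nat.choose_eq_zero_of_lt hk, Nat.choose_eq_zero_of_lt (hk.trans (Nat.lt_succ_self k))]

theorem cast_choose_two_mul_sub_succ {L ℓ : ℕ} (hℓ : ℓ < L) :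
    ((2 * L + 1).choose (2 * (L - (ℓ + 1))) : ℝ) =
      (2 * L + 1).choose (2 * (L - ℓ)) *
        (((L : ℝ) - ℓ) * (2 * ((L : ℝ) - ℓ) - 1) / ((ℓ + 1) * (2 * ℓ + 3))) := by
  have h := choose_add_two_mul (2 * L + 1) (2 * (L - (ℓ + 1)))
  rw [show 2 * (L - (ℓ + 1)) + 2 = 2 * (L - ℓ) by omega,
    show 2 * L + 1 - 2 * (L - (ℓ + 1)) = 2 * ℓ + 3 by omega,
    show 2 * (L - (ℓ + 1)) + 1 = 2 * (L - ℓ) - 1 by omega] at h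
  have hR := congrArg (Nat.cast : ℕ → ℝ) h
  push_cast [Nat.cast_sub hℓ.le, Nat.cast_sub (show 1 ≤ 2 * (L - ℓ) by omega)] at hR
  rw [mul_div_assoc', eq_div_iff (by positivity)]
  linear_combination -hR / 2

noncomputable def thiranCoeff (L ℓ : ℕ) : ℝ :=
  (-1) ^ ℓ * (L.choose ℓ : ℝ) * ∏ k ∈ range ℓ, ((1 / 2 - (L : ℝ) + k) / (3 / 2 + k))

theorem thiranCoeff_zero (L : ℕ) : thiranCoeff L 0 = 1 := by
  simp [thiranCoeff]

theorem thiranCoeff_succ (L ℓ : ℕ) :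
    thiranCoeff L (ℓ + 1) =
      thiranCoeff L ℓ * (((L : ℝ) - ℓ) * (2 * ((L : ℝ) - ℓ) - 1) / ((ℓ + 1) * (2 * ℓ + 3))) := by
  have hchoose : (L.choose (ℓ + 1) : ℝ) = L.choose ℓ * ((L : ℝ) - ℓ) / (ℓ + 1) := by
    rw [eq_div_iff (by positivity), cast_choose_succ_right_mul]
  rw [thiranCoeff, thiranCoeff, prod_range_succ, hchoose, pow_succ]
  field_simp
  ring

theorem thiranCoeff_eq_choose_div {L ℓ : ℕ} (hℓ : ℓ ≤ L) :
    thiranCoeff L ℓ = ((2 * L + 1).choose (2 * (L - ℓ)) : ℝ) / (2 * L + 1) := by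
  induction ℓ with
  | zero =>
    rw [thiranCoeff_zero, Nat.sub_zero, Nat.choose_succ_self_right]
    push_cast
    exact (div_self (by positivity)).symm
  | succ ℓ ih =>
    rw [thiranCoeff_succ, ih (by omega), cast_choose_two_mul_sub_succ (by omega)]
    ring

theorem thiran_coefficients (L : ℕ)
    (d : ℕ → ℝ)
    (hd0 : d 0 = 1)
    (hd : ∀ ℓ, 1 ≤ ℓ → ℓ ≤ L →
      d ℓ = (-1 : ℝ) ^ ℓ * (Nat.choose L ℓ : ℝ) *
        ∏ k ∈ Finset.range ℓ, ((1/2 - (L : ℝ) + (k : ℝ)) / (3/2 + (k : ℝ)))) :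
    (∀ ℓ ≤ L, d ℓ = (Nat.choose (2 * L + 1) (2 * (L - ℓ)) : ℝ) / (2 * (L : ℝ) + 1)) ∧
    (∀ n ≤ L, d (L - n) / d L = (Nat.choose (2 * L + 1) (2 * n) : ℝ)) ∧
    d L = 1 / (2 * (L : ℝ) + 1) := by
  have hd_eq : ∀ ℓ ≤ L, d ℓ = thiranCoeff L ℓ := by
    rintro (_ | ℓ) hℓ
    · rw [hd0, thiranCoeff_zero]
    · exact hd (ℓ + 1) (Nat.succ_pos ℓ) hℓ
  have closed : ∀ ℓ ≤ L, d ℓ = ((2 * L + 1).choose (2 * (L - ℓ)) : ℝ) / (2 * L + 1) :=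
    fun ℓ hℓ => (hd_eq ℓ hℓ).trans (thiranCoeff_eq_choose_div hℓ)
  have hdL : d L = 1 / (2 * (L : ℝ) + 1) := by
    simpa using closed L le_rfl
  refine ⟨closed, fun n hn => ?_, hdL⟩
  rw [closed (L - n) (Nat.sub_le L n), Nat.sub_sub_self hn, hdL]
  field_simp
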